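/- Let σ be an edge 2-coloring of G and let e = (v, v') be an edge with cc(v) = {σ(e), c₁}, cc(v') = {σ(e), c₂}, where σ(e), c₁, c₂ are pairwise distinct (the 'connect' move condition). Let σ' be obtained from σ by recoloring e and all edges colored c₁ or c₂ with a single new color c_new not used by σ. Then σ' is an edge 2-coloring. -/

import Mathlib

open SimpleGraph Set

/-- The set of edges of `G` incident to a vertex `v`. -/
def incidentEdges {V : Type*} (G : SimpleGraph V) (v : V) : Set (Sym2 V) :=
  {e | e ∈ G.edgeSet ∧ v ∈ e}

/-- The set of colors appearing on edges of `G` incident to `v` (the color class `cc(v)`). -/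
def incidentColors {V C : Type*} (G : SimpleGraph V) (σ : Sym2 V → C) (v : V) : Set C :=
  σ '' incidentEdges G v

/-- An edge `q`-coloring: every vertex has at most `q` distinct incident colors. -/
def IsEdgeColoring {V C : Type*} (G : SimpleGraph V) (q : ℕ) (σ : Sym2 V → C) : Prop :=
  ∀ v : V, (incidentColors G σ v).Finite ∧ (incidentColors G σ v).ncard ≤ q

/-- The color class of a color `c`: the set of edges of `G` colored `c`. -/
def colorClass {V C : Type*} (G : SimpleGraph V) (σ : Sym2 V → C) (c : C) : Set (Sym2 V) :=
  {e | e ∈ G.edgeSet ∧ σ e = c}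

/-! At a vertex meeting no recolored edge nothing changes. A vertex `w` meeting a recolored
edge already sees one of the merged colors `c₁, c₂` (for `w ∈ {v, v'}` because `c₁ ∈ cc(v)` and
`c₂ ∈ cc(v')`), so `cnew` replaces at least one old color at `w` and the count cannot grow. -/

theorem Set.ncard_insert_diff_le {α : Type*} {s t : Set α} (hs : s.Finite) {a : α}
    (ha : a ∈ s ∩ t) (x : α) : (insert x (s \ t)).ncard ≤ s.ncard :=
  calc (insert x (s \ t)).ncard ≤ (s \ t).ncard + 1 := ncard_insert_le x _
    _ ≤ (s \ {a}).ncard + 1 := by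
      gcongr
      · exact hs.sdiff
      · exact singleton_subset_iff.2 ha.2
    _ = s.ncard := ncard_sdiff_singleton_add_one ha.1 hs

section Recolor

variable {V C : Type*} {G : SimpleGraph V} {σ σ' : Sym2 V → C} {R : Set (Sym2 V)} {D : Set C}
  {cnew : C}

theorem incidentColors_recolor_subset (hR : ∀ f ∈ G.edgeSet, σ f ∈ D → f ∈ R)
    (h1 : ∀ f ∈ G.edgeSet, f ∈ R → σ' f = cnew) (h2 : ∀ f ∈ G.edgeSet, f ∉ R → σ' f = σ f)
    (w : V) : incidentColors G σ' w ⊆ insert cnew (incidentColors G σ w \ D) := by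
  rintro _ ⟨f, hf, rfl⟩
  by_cases hfR : f ∈ R
  · rw [h1 f hf.1 hfR]
    exact mem_insert _ _
  · rw [h2 f hf.1 hfR]
    exact mem_insert_of_mem _ ⟨⟨f, hf, rfl⟩, fun hD => hfR (hR f hf.1 hD)⟩

theorem incidentColors_recolor_eq (h2 : ∀ f ∈ G.edgeSet, f ∉ R → σ' f = σ f) {w : V}
    (hw : ∀ f ∈ incidentEdges G w, f ∉ R) : incidentColors G σ' w = incidentColors G σ w :=
  image_congr fun f hf => h2 f hf.1 (hw f hf)

theorem IsEdgeColoring.recolor {q : ℕ} (hσ : IsEdgeColoring G q σ)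
    (hR : ∀ f ∈ G.edgeSet, σ f ∈ D → f ∈ R)
    (hmeet : ∀ w, ∀ f ∈ incidentEdges G w, f ∈ R → (incidentColors G σ w ∩ D).Nonempty)
    (h1 : ∀ f ∈ G.edgeSet, f ∈ R → σ' f = cnew) (h2 : ∀ f ∈ G.edgeSet, f ∉ R → σ' f = σ f) :
    IsEdgeColoring G q σ' := by
  intro w
  obtain ⟨hfin, hcard⟩ := hσ w
  by_cases hw : ∃ f ∈ incidentEdges G w, f ∈ R
  · obtain ⟨f, hf, hfR⟩ := hw
    obtain ⟨a, ha⟩ := hmeet w f hf hfR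
    have hsub := incidentColors_recolor_subset hR h1 h2 w
    have hfin' := hfin.sdiff (t := D) |>.insert cnew
    exact ⟨hfin'.subset hsub,
      (ncard_le_ncard hsub hfin').trans ((ncard_insert_diff_le hfin ha cnew).trans hcard)⟩
  · push Not at hw
    rw [incidentColors_recolor_eq h2 hw]
    exact ⟨hfin, hcard⟩

end Recolor

theorem stmt_7_general {V C : Type*} {G : SimpleGraph V} (σ σ' : Sym2 V → C)
    (hσ : IsEdgeColoring G 2 σ) (v v' : V) (c₁ c₂ cnew : C)
    (hv : incidentColors G σ v = {σ s(v, v'), c₁})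
    (hv' : incidentColors G σ v' = {σ s(v, v'), c₂})
    (h1 : ∀ f ∈ G.edgeSet, (f = s(v, v') ∨ σ f = c₁ ∨ σ f = c₂) → σ' f = cnew)
    (h2 : ∀ f ∈ G.edgeSet, ¬(f = s(v, v') ∨ σ f = c₁ ∨ σ f = c₂) → σ' f = σ f) :
    IsEdgeColoring G 2 σ' := by
  refine hσ.recolor (R := {f | f = s(v, v') ∨ σ f = c₁ ∨ σ f = c₂}) (D := {c₁, c₂})
    (fun f _ hD => Or.inr hD) ?_ h1 h2
  rintro w f hf (rfl | hD)
  · rcases Sym2.mem_iff.1 hf.2 with rfl | rfl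
    · exact ⟨c₁, by simp [hv]⟩
    · exact ⟨c₂, by simp [hv']⟩
  · exact ⟨σ f, ⟨f, hf, rfl⟩, hD⟩

/-- The `connect` move preserves edge 2-colorings. -/
theorem stmt_7 {V C : Type*} {G : SimpleGraph V} (σ σ' : Sym2 V → C)
    (hσ : IsEdgeColoring G 2 σ) (v v' : V) (h : G.Adj v v') (c₁ c₂ cnew : C)
    (hv : incidentColors G σ v = {σ s(v, v'), c₁})
    (hv' : incidentColors G σ v' = {σ s(v, v'), c₂})
    (hd1 : σ s(v, v') ≠ c₁) (hd2 : σ s(v, v') ≠ c₂) (hd3 : c₁ ≠ c₂)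
    (hnew : cnew ∉ σ '' G.edgeSet)
    (h1 : ∀ f ∈ G.edgeSet, (f = s(v, v') ∨ σ f = c₁ ∨ σ f = c₂) → σ' f = cnew)
    (h2 : ∀ f ∈ G.edgeSet, ¬(f = s(v, v') ∨ σ f = c₁ ∨ σ f = c₂) → σ' f = σ f) :
    IsEdgeColoring G 2 σ' :=
  stmt_7_general σ σ' hσ v v' c₁ c₂ cnew hv hv' h1 h2
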